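/- arXiv:0709.1529 — 4 statements merged into one kernel-verified Lean document; each statement's English description precedes it below -/
import Mathlib

section
/- For every integer k with 0 ≤ k ≤ m−1 one has Σ_{i=0}^{m} (−1)^i · d_i^k · D(α(d,i)) = 0 in ℚ (with the convention d_i^0 = 1). (These are the Herzog–Kühl equations, which the Betti numbers β_i = D(α(d,i)) of the pure free resolution F(d) of the finite-length module M(d) must satisfy.) -/
/-- `lam m d j` is `λ_j = e_0 + Σ_{k=j+1}^m (e_k - 1)` where `e_0 = d 0` and
`e_k = d k - d (k-1)`. -/
def lam (m : ℕ) (d : ℕ → ℤ) (j : ℕ) : ℤ :=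
  d 0 + ∑ k ∈ Finset.Ioc j m, (d k - d (k - 1) - 1)

/-- `alpha m d i j` is the `j`-th entry (for `1 ≤ j ≤ m`) of the partition `α(d,i)`. -/
def alpha (m : ℕ) (d : ℕ → ℤ) (i j : ℕ) : ℤ :=
  lam m d j + if j ≤ i then d j - d (j - 1) else 0

/-- The Weyl dimension `D(α) = ∏_{1 ≤ p < q ≤ m} (α_p - α_q + q - p)/(q - p)`. -/
def weylDim (m : ℕ) (a : ℕ → ℤ) : ℚ :=
  ∏ p ∈ Finset.Icc 1 m, ∏ q ∈ Finset.Ioc p m,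
    (((a p : ℚ) - (a q : ℚ) + (q : ℚ) - (p : ℚ)) / ((q : ℚ) - (p : ℚ)))

open Finset Polynomial

lemma basis_coeff {F : Type*} [Field F] {ι : Type*} [DecidableEq ι] (s : Finset ι) (v : ι → F)
    (i : ι) (hi : i ∈ s) :
    (Lagrange.basis s v i).coeff (s.card - 1) = Lagrange.nodalWeight s v i := by
  have h : Lagrange.basis s v i = C (Lagrange.nodalWeight s v i) * Lagrange.nodal (s.erase i) v := by
    rw [Lagrange.basis_eq_prod_sub_inv_mul_nodal_div hi, Lagrange.nodal_erase_eq_nodal_div hi]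
  rw [h, coeff_C_mul]
  have hmon : (Lagrange.nodal (s.erase i) v).Monic := Lagrange.nodal_monic
  have hdeg : (Lagrange.nodal (s.erase i) v).natDegree = s.card - 1 := by
    rw [Lagrange.natDegree_nodal, card_erase_of_mem hi]
  rw [← hdeg, hmon.coeff_natDegree, mul_one]

lemma lagrange_sum {F : Type*} [Field F] {ι : Type*} [DecidableEq ι] (s : Finset ι) (v : ι → F)
    (hv : Set.InjOn v s) (k : ℕ) (hk : k + 1 < s.card) :
    ∑ i ∈ s, (v i) ^ k * Lagrange.nodalWeight s v i = 0 := by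
  have hdeg : (X ^ k : F[X]).degree < s.card := by
    rw [degree_X_pow]
    exact_mod_cast Nat.lt_of_succ_lt hk
  have h := Lagrange.eq_interpolate (f := (X ^ k : F[X])) hv hdeg
  have h2 := congrArg (fun p => Polynomial.coeff p (s.card - 1)) h
  simp only [Lagrange.interpolate_apply, Polynomial.finset_sum_coeff, coeff_C_mul,
    coeff_X_pow] at h2
  have hne : ¬ (s.card - 1 = k) := by omega
  rw [if_neg hne] at h2
  calc ∑ i ∈ s, v i ^ k * Lagrange.nodalWeight s v i
      = ∑ x ∈ s, eval (v x) (X ^ k : F[X]) * (Lagrange.basis s v x).coeff (s.card - 1) :=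
        Finset.sum_congr rfl fun i hi => by rw [basis_coeff s v i hi, eval_pow, eval_X]
    _ = 0 := h2.symm



/-- The reindexing map: `j ↦ j - 1` if `j ≤ i`, else `j`. -/
def fmap (i j : ℕ) : ℕ := if j ≤ i then j - 1 else j

lemma tele (d : ℕ → ℤ) (p : ℕ) : ∀ q, p ≤ q →
    ∑ k ∈ Finset.Ioc p q, (d k - d (k - 1)) = d q - d p := by
  intro q hq
  induction q, hq using Nat.le_induction with
  | base => simp
  | succ n hn ih =>
      rw [Finset.sum_Ioc_succ_top hn, ih]
      have h : n + 1 - 1 = n := rfl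
      rw [h]; ring

lemma lamdiff (m : ℕ) (d : ℕ → ℤ) (p q : ℕ) (hpq : p ≤ q) (hq : q ≤ m) :
    lam m d p - lam m d q = (d q - d p) - ((q : ℤ) - p) := by
  unfold lam
  have hsplit := Finset.sum_Ioc_consecutive (fun k => d k - d (k-1) - 1) hpq hq
  have h1 : ∑ k ∈ Finset.Ioc p q, (d k - d (k - 1) - 1)
      = (d q - d p) - ((q : ℤ) - p) := by
    rw [Finset.sum_sub_distrib, tele d p q hpq]
    simp [Nat.card_Ioc]
    push_cast [Nat.cast_sub hpq]
    ring
  rw [← hsplit, h1]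
  ring

lemma entry (m : ℕ) (d : ℕ → ℤ) (i p q : ℕ) (hp : 1 ≤ p) (hpq : p < q) (hq : q ≤ m) :
    alpha m d i p - alpha m d i q + ((q : ℤ) - p) = d (fmap i q) - d (fmap i p) := by
  have hl := lamdiff m d p q (le_of_lt hpq) hq
  unfold alpha fmap
  split_ifs with h1 h2 h2 <;> first
    | (exfalso; omega)
    | linarith

/-- Pairs `(p,q)` with `p ∈ A`, `q < n`, `p < q`. -/
def pairs (A : Finset ℕ) (n : ℕ) : Finset (ℕ × ℕ) :=
  (A ×ˢ Finset.range n).filter (fun x => x.1 < x.2)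

lemma prod_pairs (A : Finset ℕ) (m : ℕ) (G : ℕ → ℕ → ℚ)
    (hA : ∀ a ∈ A, a ≤ m) :
    ∏ p ∈ A, ∏ q ∈ Finset.Ioc p m, G p q = ∏ x ∈ pairs A (m+1), G x.1 x.2 := by
  rw [pairs, Finset.prod_filter, Finset.prod_product]
  refine Finset.prod_congr rfl fun p hp => ?_
  rw [← Finset.prod_filter]
  congr 1
  ext q
  simp only [Finset.mem_Ioc, Finset.mem_filter, Finset.mem_range]
  omega

lemma fm_facts (i : ℕ) (p q : ℕ) (h1 : 1 ≤ p) (h2 : p ≤ q) :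
    (p < q → fmap i p < fmap i q) ∧ (q ≤ i + 1 → 1 ≤ q → fmap i q ≤ i → True) := by
  unfold fmap; split_ifs <;> simp <;> omega

lemma Nprod (m : ℕ) (d : ℕ → ℤ) (i : ℕ) (hi : i ≤ m) :
    ∏ x ∈ pairs (Finset.Icc 1 m) (m+1), ((d (fmap i x.2) : ℚ) - d (fmap i x.1))
    = ∏ x ∈ (pairs (Finset.range (m+1)) (m+1)).filter (fun x => x.1 ≠ i ∧ x.2 ≠ i),
        ((d x.2 : ℚ) - d x.1) := by
  have hmem : ∀ x : ℕ × ℕ, x ∈ pairs (Finset.Icc 1 m) (m+1) ↔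
      1 ≤ x.1 ∧ x.1 < x.2 ∧ x.2 ≤ m := by
    intro x
    simp only [pairs, Finset.mem_filter, Finset.mem_product, Finset.mem_Icc, Finset.mem_range]
    omega
  have hmem' : ∀ x : ℕ × ℕ, x ∈ (pairs (Finset.range (m+1)) (m+1)).filter
      (fun x => x.1 ≠ i ∧ x.2 ≠ i) ↔ x.1 < x.2 ∧ x.2 ≤ m ∧ x.1 ≠ i ∧ x.2 ≠ i := by
    intro x
    simp only [pairs, Finset.mem_filter, Finset.mem_product, Finset.mem_range]
    omega
  refine Finset.prod_nbij (fun x => (fmap i x.1, fmap i x.2)) ?_ ?_ ?_ ?_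
  · intro x hx
    rw [hmem] at hx
    rw [hmem']
    dsimp only
    unfold fmap; split_ifs <;> omega
  · intro x hx y hy hxy
    rw [Finset.mem_coe, hmem] at hx hy
    have h1 : fmap i x.1 = fmap i y.1 := congrArg Prod.fst hxy
    have h2 : fmap i x.2 = fmap i y.2 := congrArg Prod.snd hxy
    unfold fmap at h1 h2
    have : x.1 = y.1 ∧ x.2 = y.2 := by
      constructor <;> [skip; skip] <;>
        (revert h1 h2; split_ifs <;> omega)
    exact Prod.ext this.1 this.2
  · intro y hy
    rw [Finset.mem_coe, hmem'] at hy
    obtain ⟨hlt, hle, hne1, hne2⟩ := hy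
    simp only [Set.mem_image, Finset.mem_coe]
    refine ⟨(if y.1 < i then y.1 + 1 else y.1, if y.2 < i then y.2 + 1 else y.2), ?_, ?_⟩
    · rw [hmem]; split_ifs <;> omega
    · have e1 : fmap i (if y.1 < i then y.1 + 1 else y.1) = y.1 := by
        unfold fmap; split_ifs <;> omega
      have e2 : fmap i (if y.2 < i then y.2 + 1 else y.2) = y.2 := by
        unfold fmap; split_ifs <;> omega
      rw [Prod.ext_iff]; exact ⟨e1, e2⟩
  · intro x hx; rfl

lemma Pprod (m : ℕ) (d : ℕ → ℤ) (i : ℕ) (hi : i ≤ m) :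
    ∏ x ∈ (pairs (Finset.range (m+1)) (m+1)).filter (fun x => ¬(x.1 ≠ i ∧ x.2 ≠ i)),
        ((d x.2 : ℚ) - d x.1)
    = (∏ a ∈ Finset.range i, ((d i : ℚ) - d a)) * ∏ b ∈ Finset.Ioc i m, ((d b : ℚ) - d i) := by
  have hset : (pairs (Finset.range (m+1)) (m+1)).filter (fun x => ¬(x.1 ≠ i ∧ x.2 ≠ i))
      = ((Finset.range i).image (fun a => (a, i))) ∪ ((Finset.Ioc i m).image (fun b => (i, b))) := by
    ext x
    simp only [Finset.mem_filter, Finset.mem_union, Finset.mem_image, Finset.mem_range,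
      Finset.mem_Ioc, pairs, Finset.mem_product, Prod.ext_iff]
    constructor
    · rintro ⟨⟨⟨h1, h2⟩, h3⟩, h4⟩
      by_cases hx2 : x.2 = i
      · exact Or.inl ⟨x.1, by omega, rfl, hx2.symm⟩
      · have hx1 : x.1 = i := by tauto
        exact Or.inr ⟨x.2, by omega, hx1.symm, rfl⟩
    · rintro (⟨a, ha, h1, h2⟩ | ⟨b, hb, h1, h2⟩) <;> omega
  rw [hset, Finset.prod_union, Finset.prod_image, Finset.prod_image]
  · intro a _ b _ h; exact (Prod.ext_iff.mp h).2
  · intro a _ b _ h; exact (Prod.ext_iff.mp h).1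
  · rw [Finset.disjoint_left]
    rintro x hx1 hx2
    simp only [Finset.mem_image, Finset.mem_range, Finset.mem_Ioc, Prod.ext_iff] at hx1 hx2
    obtain ⟨a, ha, h1, h2⟩ := hx1
    obtain ⟨b, hb, h3, h4⟩ := hx2
    omega

lemma weyl_eq (m : ℕ) (d : ℕ → ℤ) (i : ℕ) :
    weylDim m (alpha m d i) =
      (∏ p ∈ Finset.Icc 1 m, ∏ q ∈ Finset.Ioc p m, ((d (fmap i q) : ℚ) - d (fmap i p))) /
      (∏ p ∈ Finset.Icc 1 m, ∏ q ∈ Finset.Ioc p m, ((q : ℚ) - (p : ℚ))) := by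
  rw [weylDim]
  rw [show (∏ p ∈ Finset.Icc 1 m, ∏ q ∈ Finset.Ioc p m,
      (((alpha m d i p : ℚ)) - (alpha m d i q : ℚ) + (q : ℚ) - (p : ℚ)) / ((q : ℚ) - (p : ℚ)))
      = ∏ p ∈ Finset.Icc 1 m, ∏ q ∈ Finset.Ioc p m,
      (((d (fmap i q) : ℚ) - d (fmap i p)) / ((q : ℚ) - (p : ℚ))) from ?_]
  · simp only [Finset.prod_div_distrib]
  · refine Finset.prod_congr rfl fun p hp => Finset.prod_congr rfl fun q hq => ?_
    simp only [Finset.mem_Icc, Finset.mem_Ioc] at hp hq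
    have h := entry m d i p q hp.1 hq.1 hq.2
    have h2 : ((alpha m d i p : ℚ)) - (alpha m d i q : ℚ) + (q : ℚ) - (p : ℚ)
        = (d (fmap i q) : ℚ) - (d (fmap i p) : ℚ) := by
      have h3 := congrArg (fun z : ℤ => (z : ℚ)) h
      push_cast at h3
      linarith
    rw [h2]

/-- **Herzog–Kühl equations** for the Betti numbers `β_i = D(α(d,i))` of the pure
resolution `F(d)`: for every `0 ≤ k ≤ m - 1`,
`Σ_{i=0}^m (-1)^i d_i^k D(α(d,i)) = 0` in `ℚ`. -/
theorem herzog_kuhl_equations (m : ℕ) (hm : 1 ≤ m)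
    (d : ℕ → ℤ) (hd : ∀ i < m, d i < d (i + 1)) (k : ℕ) (hk : k ≤ m - 1) :
    ∑ i ∈ Finset.range (m + 1),
      (-1 : ℚ) ^ i * (d i : ℚ) ^ k * weylDim m (alpha m d i) = 0 := by
  classical
  set s : Finset ℕ := Finset.range (m + 1) with hs
  set D : ℕ → ℚ := fun j => (d j : ℚ) with hD
  -- d is strictly monotone up to m
  have hdmono : ∀ b ≤ m, ∀ a < b, d a < d b := by
    intro b
    induction b with
    | zero => omega
    | succ n ih =>
        intro hn a ha
        have h1 : d n < d (n + 1) := hd n (by omega)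
        rcases Nat.lt_succ_iff_lt_or_eq.mp ha with h | h
        · exact lt_trans (ih (by omega) a h) h1
        · rw [h]; exact h1
  have hne : ∀ a b : ℕ, a < b → b ≤ m → D a ≠ D b := by
    intro a b h1 h2
    have h3 := hdmono b h2 a h1
    have h4 : (d a : ℚ) < d b := by exact_mod_cast h3
    exact ne_of_lt h4
  have hInj : Set.InjOn D ↑s := by
    intro a ha b hb hab
    simp only [hs, Finset.coe_range, Set.mem_Iio] at ha hb
    rcases lt_trichotomy a b with h | h | h
    · exact absurd hab (hne a b h (by omega))
    · exact h
    · exact absurd hab.symm (hne b a h (by omega))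
  -- the key quantities
  set V : ℚ := ∏ x ∈ pairs s (m + 1), (D x.2 - D x.1) with hV
  set Den : ℚ := ∏ p ∈ Finset.Icc 1 m, ∏ q ∈ Finset.Ioc p m, ((q : ℚ) - (p : ℚ)) with hDen
  have hDen_ne : Den ≠ 0 := by
    rw [hDen]
    rw [Finset.prod_ne_zero_iff]
    intro p hp
    rw [Finset.prod_ne_zero_iff]
    intro q hq
    simp only [Finset.mem_Icc, Finset.mem_Ioc] at hp hq
    have : (p : ℚ) < (q : ℚ) := by exact_mod_cast hq.1
    exact sub_ne_zero_of_ne (by linarith)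
  have hW_ne : ∀ i ∈ s, (∏ j ∈ s.erase i, (D i - D j)) ≠ 0 := by
    intro i hi
    rw [Finset.prod_ne_zero_iff]
    intro j hj
    have hji : j ≠ i := (Finset.mem_erase.mp hj).1
    have hjs : j ∈ s := (Finset.mem_erase.mp hj).2
    exact sub_ne_zero_of_ne fun hcon => hji (hInj hjs hi hcon.symm)
  -- split W
  have hWsplit : ∀ i ≤ m, (∏ j ∈ s.erase i, (D i - D j))
      = (∏ a ∈ Finset.range i, (D i - D a)) * ∏ b ∈ Finset.Ioc i m, (D i - D b) := by
    intro i hi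
    have hset : s.erase i = Finset.range i ∪ Finset.Ioc i m := by
      ext j
      simp only [hs, Finset.mem_erase, Finset.mem_range, Finset.mem_union, Finset.mem_Ioc]
      omega
    rw [hset, Finset.prod_union]
    rw [Finset.disjoint_left]
    intro j hj1 hj2
    simp only [Finset.mem_range, Finset.mem_Ioc] at hj1 hj2
    omega
  -- P i = (-1)^(m-i) * W i
  have hP : ∀ i ≤ m,
      ∏ x ∈ (pairs s (m+1)).filter (fun x => ¬(x.1 ≠ i ∧ x.2 ≠ i)), (D x.2 - D x.1)
      = (-1 : ℚ) ^ (m - i) * ∏ j ∈ s.erase i, (D i - D j) := by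
    intro i hi
    rw [hs]
    rw [Pprod m d i hi]
    have hneg : ∏ b ∈ Finset.Ioc i m, ((d b : ℚ) - d i)
        = (-1 : ℚ) ^ (m - i) * ∏ b ∈ Finset.Ioc i m, ((d i : ℚ) - d b) := by
      calc ∏ b ∈ Finset.Ioc i m, ((d b : ℚ) - d i)
          = ∏ b ∈ Finset.Ioc i m, (-1 * ((d i : ℚ) - d b)) :=
            Finset.prod_congr rfl fun b _ => by ring
        _ = (∏ _b ∈ Finset.Ioc i m, (-1 : ℚ)) * ∏ b ∈ Finset.Ioc i m, ((d i : ℚ) - d b) :=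
            Finset.prod_mul_distrib
        _ = (-1 : ℚ) ^ (m - i) * ∏ b ∈ Finset.Ioc i m, ((d i : ℚ) - d b) := by
            rw [Finset.prod_const, Nat.card_Ioc]
    rw [hneg, hWsplit i hi]
    ring
  -- weylDim in terms of V, W, Den
  have hweyl : ∀ i ≤ m, weylDim m (alpha m d i)
      = V / ((-1 : ℚ) ^ (m - i) * ∏ j ∈ s.erase i, (D i - D j)) / Den := by
    intro i hi
    rw [weyl_eq m d i]
    congr 1
    rw [prod_pairs (Finset.Icc 1 m) m (fun p q => (d (fmap i q) : ℚ) - d (fmap i p))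
      (fun a ha => (Finset.mem_Icc.mp ha).2)]
    rw [show (∏ x ∈ pairs (Finset.Icc 1 m) (m+1), ((d (fmap i x.2) : ℚ) - d (fmap i x.1)))
        = ∏ x ∈ (pairs (Finset.range (m+1)) (m+1)).filter (fun x => x.1 ≠ i ∧ x.2 ≠ i),
            ((d x.2 : ℚ) - d x.1) from Nprod m d i hi]
    have hVsplit : V = (∏ x ∈ (pairs s (m+1)).filter (fun x => x.1 ≠ i ∧ x.2 ≠ i),
          (D x.2 - D x.1))
        * ∏ x ∈ (pairs s (m+1)).filter (fun x => ¬(x.1 ≠ i ∧ x.2 ≠ i)), (D x.2 - D x.1) := by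
      rw [hV, Finset.prod_filter_mul_prod_filter_not]
    have hPne : ∏ x ∈ (pairs s (m+1)).filter (fun x => ¬(x.1 ≠ i ∧ x.2 ≠ i)),
        (D x.2 - D x.1) ≠ 0 := by
      rw [hP i hi]
      exact mul_ne_zero (pow_ne_zero _ (by norm_num))
        (hW_ne i (by simp only [hs, Finset.mem_range]; omega))
    rw [eq_div_iff (by rw [← hP i hi]; exact hPne)]
    rw [hVsplit, ← hP i hi]
  -- final computation
  have hcard : s.card = m + 1 := by simp [hs]
  have hlag := lagrange_sum s D hInj k (by rw [hcard]; omega)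
  have key : ∀ i ∈ s, (-1 : ℚ) ^ i * (d i : ℚ) ^ k * weylDim m (alpha m d i)
      = ((-1 : ℚ) ^ m * V / Den) * (D i ^ k * Lagrange.nodalWeight s D i) := by
    intro i hi
    have him : i ≤ m := by simp only [hs, Finset.mem_range] at hi; omega
    rw [hweyl i him]
    have hWinv : Lagrange.nodalWeight s D i = (∏ j ∈ s.erase i, (D i - D j))⁻¹ := by
      rw [Lagrange.nodalWeight, Finset.prod_inv_distrib]
    rw [hWinv]
    set W := ∏ j ∈ s.erase i, (D i - D j) with hWd
    have hW : W ≠ 0 := hW_ne i hi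
    have hpow : ((-1 : ℚ)) ^ i * (-1) ^ (m - i) = (-1) ^ m := by
      rw [← pow_add]; congr 1; omega
    have hbinv : (((-1 : ℚ)) ^ (m - i))⁻¹ = (-1) ^ (m - i) := by
      rw [← inv_pow]; norm_num
    have hDi : (d i : ℚ) = D i := rfl
    rw [hDi, div_div, div_eq_mul_inv, div_eq_mul_inv, mul_inv, mul_inv, hbinv]
    linear_combination (D i ^ k * V * W⁻¹ * Den⁻¹) * hpow
  rw [Finset.sum_congr rfl key, ← Finset.mul_sum, hlag, mul_zero]
end

section
/- For every 2 ≤ i ≤ m one has α(d,i)_i = α(d,i−2)_{i−1} + 1; in particular α(d,i)_i > α(d,i−2)_{i−1}, so the skew shape α(d,i)/α(d,i−2) is not a vertical strip. (By Pieri's formula, S_{α(d,i)}E therefore does not occur in S_{α(d,i−2)}E ⊗ S_{e_{i−1}+e_i}E, which forces the composite φ(d,i−1) ∘ φ(d,i) of two consecutive equivariant differentials of F(d) to vanish, so F(d) is a complex.) -/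
/-!
Only the `i`-th and `(i-1)`-st entries matter: `α(d,i)_i = λ_i + e_i` while
`α(d,i-2)_{i-1} = λ_{i-1} = λ_i + (e_i - 1)`, so the two differ by exactly one.
-/

theorem lam_eq_lam_succ_add {m j : ℕ} (hj : j < m) (d : ℕ → ℤ) :
    lam m d j = lam m d (j + 1) + (d (j + 1) - d j - 1) := by
  have hIoc : Finset.Ioc j m = insert (j + 1) (Finset.Ioc (j + 1) m) := by
    rw [Finset.Ioc_insert_left (by omega), ← Finset.Icc_add_one_left_eq_Ioc]
  rw [lam, lam, hIoc, Finset.sum_insert (by simp), Nat.add_sub_cancel]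
  ring

theorem alpha_self (m : ℕ) (d : ℕ → ℤ) (i : ℕ) :
    alpha m d i i = lam m d i + (d i - d (i - 1)) := by
  rw [alpha, if_pos le_rfl]

theorem alpha_of_lt {m i j : ℕ} (d : ℕ → ℤ) (hij : i < j) : alpha m d i j = lam m d j := by
  rw [alpha, if_neg (by omega), add_zero]

theorem alpha_add_two_self {m k : ℕ} (hk : k + 2 ≤ m) (d : ℕ → ℤ) :
    alpha m d (k + 2) (k + 2) = alpha m d k (k + 1) + 1 := by
  rw [alpha_self, alpha_of_lt d (Nat.lt_succ_self k), lam_eq_lam_succ_add (j := k + 1) hk,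
    show k + 2 - 1 = k + 1 by omega]
  ring

theorem alpha_two_steps_not_vertical_strip_general (m : ℕ)
    (d : ℕ → ℤ) :
    ∀ i, 2 ≤ i → i ≤ m →
      alpha m d i i = alpha m d (i - 2) (i - 1) + 1 ∧
      alpha m d (i - 2) (i - 1) < alpha m d i i ∧
      ¬ (∀ j, 2 ≤ j → j ≤ m → alpha m d i j ≤ alpha m d (i - 2) (j - 1)) := by
  intro i hi2 him
  obtain ⟨k, rfl⟩ : ∃ k, i = k + 2 := ⟨i - 2, by omega⟩
  have key : alpha m d (k + 2 - 2) (k + 2 - 1) = alpha m d (k + 2) (k + 2) - 1 := by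
    rw [Nat.add_sub_cancel, show k + 2 - 1 = k + 1 by omega, alpha_add_two_self him]
    ring
  refine ⟨by omega, by omega, fun hstrip => ?_⟩
  have hat_i := hstrip (k + 2) hi2 him
  omega

/-- For `2 ≤ i ≤ m` one has `α(d,i)_i = α(d,i-2)_{i-1} + 1`, in particular
`α(d,i)_i > α(d,i-2)_{i-1}`, so the skew shape `α(d,i)/α(d,i-2)` is not a vertical
strip (it fails the condition `μ_j ≤ λ_{j-1}` at `j = i`).  By Pieri's formula this
forces the composite of two consecutive differentials of `F(d)` to vanish. -/
theorem alpha_two_steps_not_vertical_strip (m : ℕ) (hm : 1 ≤ m)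
    (d : ℕ → ℤ) (hd : ∀ i < m, d i < d (i + 1)) :
    ∀ i, 2 ≤ i → i ≤ m →
      alpha m d i i = alpha m d (i - 2) (i - 1) + 1 ∧
      alpha m d (i - 2) (i - 1) < alpha m d i i ∧
      ¬ (∀ j, 2 ≤ j → j ≤ m → alpha m d i j ≤ alpha m d (i - 2) (j - 1)) :=
  alpha_two_steps_not_vertical_strip_general m d
end

section
/- Assume the sequence e is symmetric, i.e. e_i = e_{m+1−i} for i = 1, …, m. Then D(α(d,i)) = D(α(d,m−i)) for all 0 ≤ i ≤ m. (The Betti numbers of the self-dual pure complex F(d) of Proposition 3.5 satisfy β_i = β_{m−i}, since complementary partitions in a rectangle give Schur modules of equal dimension.) -/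
/-!
When `e` is symmetric, `α(d, m - i)` is the complement of `α(d, i)` in a rectangle:
`α(d, m - i)_j + α(d, i)_{m + 1 - j}` does not depend on `j`. Weyl's product only sees the
differences `α_p - α_q`, and the substitution `(p, q) ↦ (m + 1 - q, m + 1 - p)` permutes its
factors, so complementary sequences have the same Weyl dimension.
-/

open Finset

lemma weylDim_eq_prod_pairs (m : ℕ) (a : ℕ → ℤ) :
    weylDim m a = ∏ x ∈ (Icc 1 m ×ˢ Icc 1 m).filter (fun x => x.1 < x.2),
      (((a x.1 : ℚ) - a x.2 + x.2 - x.1) / ((x.2 : ℚ) - x.1)) :=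
  (prod_finset_product' _ _ _ (fun x => by
    simp only [mem_filter, mem_product, mem_Icc, mem_Ioc]; omega)).symm

lemma weylDim_eq_of_add_reflect_eq (m : ℕ) (a b : ℕ → ℤ) (C : ℤ)
    (h : ∀ j, 1 ≤ j → j ≤ m → b j + a (m + 1 - j) = C) :
    weylDim m b = weylDim m a := by
  rw [weylDim_eq_prod_pairs, weylDim_eq_prod_pairs]
  refine prod_nbij' (fun x => (m + 1 - x.2, m + 1 - x.1)) (fun x => (m + 1 - x.2, m + 1 - x.1))
    ?_ ?_ ?_ ?_ ?_ <;>
  rintro ⟨p, q⟩ hpq <;>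
  simp only [mem_filter, mem_product, mem_Icc, Prod.mk.injEq] at hpq ⊢
  · omega
  · omega
  · omega
  · omega
  have hp : (b p : ℚ) = C - a (m + 1 - p) :=
    eq_sub_of_add_eq (by exact_mod_cast h p (by omega) (by omega))
  have hq : (b q : ℚ) = C - a (m + 1 - q) :=
    eq_sub_of_add_eq (by exact_mod_cast h q (by omega) (by omega))
  rw [hp, hq, Nat.cast_sub (by omega), Nat.cast_sub (by omega)]
  push_cast
  ring

lemma sum_Ioc_reflect {M : Type*} [AddCommMonoid M] (f : ℕ → M) (n m : ℕ) :
    ∑ k ∈ Ioc n m, f k = ∑ k ∈ Ioc 0 (m - n), f (m + 1 - k) := by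
  refine sum_nbij' (fun k => m + 1 - k) (fun k => m + 1 - k) ?_ ?_ ?_ ?_ ?_ <;>
  intro k hk <;> simp only [mem_Ioc] at hk ⊢
  · omega
  · omega
  · omega
  · omega
  · congr; omega

lemma sum_Ioc_sub_pred (d : ℕ → ℤ) (m : ℕ) :
    ∑ k ∈ Ioc 0 m, (d k - d (k - 1)) = d m - d 0 := by
  induction m with
  | zero => simp
  | succ n ih => rw [sum_Ioc_succ_top n.zero_le, ih]; simp

section Symmetric

variable {m : ℕ} {d : ℕ → ℤ}
  (hsym : ∀ i, 1 ≤ i → i ≤ m → d i - d (i - 1) = d (m + 1 - i) - d (m - i))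
include hsym

lemma lam_add_lam_reflect {j : ℕ} (hj₁ : 1 ≤ j) (hjm : j ≤ m) :
    lam m d j + lam m d (m + 1 - j) + (d j - d (j - 1)) = d 0 + d m - m + 1 := by
  obtain ⟨i, rfl⟩ : ∃ i, j = i + 1 := ⟨j - 1, by omega⟩
  set g : ℕ → ℤ := fun k => d k - d (k - 1) - 1
  have hreflect : ∑ k ∈ Ioc (m + 1 - (i + 1)) m, g k = ∑ k ∈ Ioc 0 i, g k := by
    rw [sum_Ioc_reflect g, show m - (m + 1 - (i + 1)) = i by omega]
    refine sum_congr rfl fun k hk => ?_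
    simp only [mem_Ioc] at hk
    simp only [g, hsym k (by omega) (by omega), show m + 1 - k - 1 = m - k by omega]
  have hsplit : ∑ k ∈ Ioc 0 i, g k + g (i + 1) + ∑ k ∈ Ioc (i + 1) m, g k
      = ∑ k ∈ Ioc 0 m, g k := by
    rw [← sum_Ioc_succ_top i.zero_le, sum_Ioc_consecutive _ (by omega) (by omega)]
  have htelescope : ∑ k ∈ Ioc 0 m, g k = d m - d 0 - m := by
    simp only [g]
    rw [sum_sub_distrib, sum_Ioc_sub_pred]
    simp
  unfold lam
  simp only [g, Nat.add_sub_cancel] at hreflect hsplit ⊢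
  linarith

lemma alpha_sub_add_alpha_reflect (i : ℕ) {j : ℕ} (hj₁ : 1 ≤ j) (hjm : j ≤ m) :
    alpha m d (m - i) j + alpha m d i (m + 1 - j) = d 0 + d m - m + 1 := by
  have hlam := lam_add_lam_reflect hsym hj₁ hjm
  have he := hsym j hj₁ hjm
  rw [show m - j = m + 1 - j - 1 by omega] at he
  unfold alpha
  split_ifs <;> omega

end Symmetric

theorem weylDim_symmetric_of_symmetric_general (m : ℕ)
    (d : ℕ → ℤ)
    (hsym : ∀ i, 1 ≤ i → i ≤ m → d i - d (i - 1) = d (m + 1 - i) - d (m - i)) :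
    ∀ i ≤ m, weylDim m (alpha m d i) = weylDim m (alpha m d (m - i)) := fun i _ =>
  (weylDim_eq_of_add_reflect_eq m _ _ _ fun _ => alpha_sub_add_alpha_reflect hsym i).symm

/-- If the sequence `e` is symmetric (`e_i = e_{m+1-i}` for `1 ≤ i ≤ m`) then the Betti
numbers of the self-dual pure complex `F(d)` of Proposition 3.5 are symmetric:
`D(α(d,i)) = D(α(d,m-i))`. -/
theorem weylDim_symmetric_of_symmetric (m : ℕ) (hm : 1 ≤ m)
    (d : ℕ → ℤ) (hd : ∀ i < m, d i < d (i + 1))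
    (hsym : ∀ i, 1 ≤ i → i ≤ m → d i - d (i - 1) = d (m + 1 - i) - d (m - i)) :
    ∀ i ≤ m, weylDim m (alpha m d i) = weylDim m (alpha m d (m - i)) :=
  weylDim_symmetric_of_symmetric_general m d hsym
end

section
/- Assume d_0 = 0. Then for every integer r with 1 ≤ r ≤ λ_1 + e_1 − 1, #{j : 1 ≤ j ≤ m and α(d,0)_j ≥ r} + 1 = #{j : 1 ≤ j ≤ m and α(d,m)_j ≥ r + 1}; moreover α(d,m)_j ≥ 1 for all 1 ≤ j ≤ m. (Equivalently: the partition obtained from α(d,0) by adding one box to each of the first α(d,1)_1 − 1 rows of its Young diagram equals the partition α(d,m) with its first row, of length m, removed. This identifies the representation in the highest degree of M(d), i.e. its socle, which sits in a single degree because the last term of the pure resolution is pure.) -/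
/-- **Identification of the socle representation of `M(d)`.**  Assume `d 0 = 0`.
Reading the entries of a partition as column lengths (so the `r`-th row length of `μ`
is `#{j : μ_j ≥ r}`), for every `1 ≤ r ≤ λ_1 + e_1 - 1` one has
`#{j ∈ [1,m] : α(d,0)_j ≥ r} + 1 = #{j ∈ [1,m] : α(d,m)_j ≥ r + 1}`, and moreover
`α(d,m)_j ≥ 1` for all `1 ≤ j ≤ m`: i.e. adding one box to each of the first
`α(d,1)_1 - 1` rows of `α(d,0)` yields `α(d,m)` with its first row (of length `m`)
removed. -/
theorem socle_partition_identity (m : ℕ) (hm : 1 ≤ m)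
    (d : ℕ → ℤ) (hd : ∀ i < m, d i < d (i + 1)) (h0 : d 0 = 0) :
    (∀ r : ℤ, 1 ≤ r → r ≤ lam m d 1 + (d 1 - d 0) - 1 →
      ((Finset.Icc 1 m).filter (fun j => r ≤ alpha m d 0 j)).card + 1 =
        ((Finset.Icc 1 m).filter (fun j => r + 1 ≤ alpha m d m j)).card) ∧
    (∀ j, 1 ≤ j → j ≤ m → 1 ≤ alpha m d m j) := by
  have he : ∀ k, 1 ≤ k → k ≤ m → 1 ≤ d k - d (k - 1) := by
    intro k hk1 hkm
    have h := hd (k - 1) (by omega)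
    have hk : k - 1 + 1 = k := by omega
    rw [hk] at h
    omega
  have hlam_nonneg : ∀ j, 0 ≤ lam m d j := by
    intro j
    unfold lam
    rw [h0]
    have h : ∀ k ∈ Finset.Ioc j m, (0:ℤ) ≤ d k - d (k - 1) - 1 := by
      intro k hk
      simp only [Finset.mem_Ioc] at hk
      have := he k (by omega) hk.2
      omega
    have := Finset.sum_nonneg h
    omega
  have hlam_m : lam m d m = 0 := by simp [lam, h0]
  have hlam_succ : ∀ j, 1 ≤ j → j ≤ m →
      lam m d (j - 1) = lam m d j + (d j - d (j - 1)) - 1 := by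
    intro j h1 h2
    unfold lam
    have hins : Finset.Ioc (j - 1) m = insert j (Finset.Ioc j m) := by
      ext k
      simp only [Finset.mem_Ioc, Finset.mem_insert]
      omega
    rw [hins, Finset.sum_insert (by simp)]
    ring
  have hlam0 : lam m d 0 = lam m d 1 + (d 1 - d 0) - 1 := by
    have := hlam_succ 1 le_rfl hm
    simpa using this
  constructor
  · intro r hr1 hr2
    have hr0 : r ≤ lam m d 0 := by omega
    have hS : (Finset.Icc 1 m).filter (fun j => r ≤ alpha m d 0 j)
        = (Finset.Icc 1 m).filter (fun j => r ≤ lam m d j) := by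
      apply Finset.filter_congr
      intro j hj
      simp only [Finset.mem_Icc] at hj
      simp [alpha, show ¬ j ≤ 0 by omega]
    have hT : (Finset.Icc 1 m).filter (fun j => r + 1 ≤ alpha m d m j)
        = (Finset.Icc 1 m).filter (fun j => r ≤ lam m d (j - 1)) := by
      apply Finset.filter_congr
      intro j hj
      simp only [Finset.mem_Icc] at hj
      have ha : alpha m d m j = lam m d (j - 1) + 1 := by
        simp only [alpha, if_pos hj.2]
        rw [hlam_succ j hj.1 hj.2]
        ring
      rw [ha]
      constructor <;> intro <;> omega
    rw [hS, hT]
    set S := (Finset.Icc 1 m).filter (fun j => r ≤ lam m d j) with hSdef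
    have h0S : (0 : ℕ) ∉ S := by simp [hSdef]
    have hcard : ((Finset.Icc 1 m).filter (fun j => r ≤ lam m d (j - 1))).card
        = (insert 0 S).card := by
      refine Finset.card_bij' (fun j _ => j - 1) (fun j _ => j + 1) ?_ ?_ ?_ ?_
      · intro a ha
        simp only [Finset.mem_filter, Finset.mem_Icc] at ha
        rcases eq_or_ne a 1 with rfl | hne
        · simp
        · simp only [Finset.mem_insert, hSdef, Finset.mem_filter, Finset.mem_Icc]
          right
          exact ⟨⟨by omega, by omega⟩, ha.2⟩
      · intro a ha
        simp only [Finset.mem_insert, hSdef, Finset.mem_filter, Finset.mem_Icc] at ha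
        simp only [Finset.mem_filter, Finset.mem_Icc]
        rcases ha with rfl | ⟨⟨h1, h2⟩, hr⟩
        · exact ⟨⟨le_rfl, hm⟩, by simpa using hr0⟩
        · have ham : a ≠ m := by
            rintro rfl
            rw [hlam_m] at hr
            omega
          exact ⟨⟨by omega, by omega⟩, by simpa using hr⟩
      · intro a ha
        simp only [Finset.mem_filter, Finset.mem_Icc] at ha
        show a - 1 + 1 = a
        omega
      · intro a ha
        show a + 1 - 1 = a
        omega
    rw [hcard, Finset.card_insert_of_notMem h0S, add_comm]
  · intro j h1 h2
    have ha : alpha m d m j = lam m d j + (d j - d (j - 1)) := by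
      simp [alpha, if_pos h2]
    rw [ha]
    have := hlam_nonneg j
    have := he j h1 h2
    omega
end
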